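/- arXiv:2512.03773 — 3 statements merged into one kernel-verified Lean document; each statement's English description precedes it below -/
import Mathlib

section
/- Let p(x,ξ) = a(x)ξ·ξ + b(x)·ξ + c(x) on ℝ^n × ℝ^n, where a is a smooth map into real symmetric n×n matrices, b : ℝ^n → ℝ^n and c : ℝ^n → ℝ are smooth, and a(x₀) is positive definite. Suppose the differential of p vanishes at ρ₀ = (x₀, ξ₀). If γ : (−1,1) → ℝ^n × ℝ^n is a C² curve with γ(0) = ρ₀, with p ∘ γ constant, and such that the x-component of γ′(0) is 0, then γ′(0) = 0. (Equivalently: the tangent space at ρ₀ of any submanifold of the level set {p = p(ρ₀)} contains no nonzero vector of the form (0, T_ξ), so such a submanifold projects nicely on the x-space near ρ₀.) -/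
open Matrix Asymptotics Filter

section helpers

variable {α : Type*} {m : ℕ} {l : Filter α}

lemma dot_isBigO {f h : α → Fin m → ℝ} {g k : α → ℝ}
    (hf : f =O[l] g) (hh : h =O[l] k) :
    (fun t => f t ⬝ᵥ h t) =O[l] fun t => g t * k t := by
  simp only [dotProduct]
  refine IsBigO.fun_sum fun i _ => ?_
  have h1 : (fun t => f t i) =O[l] g :=
    (isBigO_of_le l fun t => norm_le_pi_norm (f t) i).trans hf
  have h2 : (fun t => h t i) =O[l] k :=
    (isBigO_of_le l fun t => norm_le_pi_norm (h t) i).trans hh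
  exact h1.mul h2

lemma mulVec_isBigO {M : α → Matrix (Fin m) (Fin m) ℝ} {w : α → Fin m → ℝ} {g k : α → ℝ}
    (hM : ∀ i j, (fun t => M t i j) =O[l] g) (hw : w =O[l] k) :
    (fun t => (M t).mulVec (w t)) =O[l] fun t => g t * k t := by
  rw [isBigO_pi]
  intro i
  simp only [Matrix.mulVec, dotProduct]
  refine IsBigO.fun_sum fun j _ => ?_
  have h2 : (fun t => w t j) =O[l] k :=
    (isBigO_of_le l fun t => norm_le_pi_norm (w t) j).trans hw
  exact (hM i j).mul h2

lemma mulVec_dot_symm (M : Matrix (Fin m) (Fin m) ℝ) (hM : M.IsSymm) (u v : Fin m → ℝ) :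
    M.mulVec u ⬝ᵥ v = M.mulVec v ⬝ᵥ u := by
  simp only [Matrix.mulVec, dotProduct, Finset.sum_mul, Finset.mul_sum]
  rw [Finset.sum_comm]
  refine Finset.sum_congr rfl fun i _ => Finset.sum_congr rfl fun j _ => ?_
  rw [hM.apply i j]
  ring

lemma quad_expand (M : Matrix (Fin m) (Fin m) ℝ) (hM : M.IsSymm) (u d : Fin m → ℝ) :
    M.mulVec (u + d) ⬝ᵥ (u + d)
      = M.mulVec u ⬝ᵥ u + 2 * (M.mulVec u ⬝ᵥ d) + M.mulVec d ⬝ᵥ d := by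
  rw [Matrix.mulVec_add, add_dotProduct, dotProduct_add, dotProduct_add,
    mulVec_dot_symm M hM d u]
  ring

end helpers

/-- For `p(x,ξ) = a(x)ξ·ξ + b(x)·ξ + c(x)` with `a(x₀)` positive definite and `dp(ρ₀) = 0`
at `ρ₀ = (x₀, ξ₀)`: any `C²` curve `γ` in the level set of `p` through `ρ₀` whose velocity
at `0` has vanishing `x`-component has vanishing velocity at `0`.  (Hence submanifolds of
the level set project nicely on the `x`-space near `ρ₀`.) -/
theorem stmt_3 {n : ℕ} (a : (Fin n → ℝ) → Matrix (Fin n) (Fin n) ℝ)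
    (b : (Fin n → ℝ) → Fin n → ℝ) (c : (Fin n → ℝ) → ℝ)
    (ha : ∀ i j, ContDiff ℝ (⊤ : ℕ∞) fun x => a x i j)
    (hb : ContDiff ℝ (⊤ : ℕ∞) b) (hc : ContDiff ℝ (⊤ : ℕ∞) c)
    (hsymm : ∀ x, (a x).IsSymm)
    (p : (Fin n → ℝ) × (Fin n → ℝ) → ℝ)
    (hp : ∀ x ξ, p (x, ξ) = (a x).mulVec ξ ⬝ᵥ ξ + b x ⬝ᵥ ξ + c x)
    (x₀ ξ₀ : Fin n → ℝ)
    (hpos : (a x₀).PosDef)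
    (hcrit : fderiv ℝ p (x₀, ξ₀) = 0)
    (γ : ℝ → (Fin n → ℝ) × (Fin n → ℝ))
    (hγ : ContDiffOn ℝ 2 γ (Set.Ioo (-1 : ℝ) 1))
    (hγ0 : γ 0 = (x₀, ξ₀))
    (hconst : ∀ t ∈ Set.Ioo (-1 : ℝ) 1, p (γ t) = p (x₀, ξ₀))
    (hx : (deriv γ 0).1 = 0) :
    deriv γ 0 = 0 := by
  classical
  have h0mem : (0:ℝ) ∈ Set.Ioo (-1:ℝ) 1 := by norm_num
  have hIoo : Set.Ioo (-1:ℝ) 1 ∈ nhds (0:ℝ) := isOpen_Ioo.mem_nhds h0mem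
  set T := deriv γ 0 with hT
  set v := T.2 with hv
  -- smoothness of p
  have hpfun : p = fun q : (Fin n → ℝ) × (Fin n → ℝ) =>
      (a q.1).mulVec q.2 ⬝ᵥ q.2 + b q.1 ⬝ᵥ q.2 + c q.1 := by
    funext q
    rw [← hp q.1 q.2]
  have hpC : ContDiff ℝ (⊤:ℕ∞) p := by
    rw [hpfun]
    have hquad : ContDiff ℝ (⊤:ℕ∞) fun q : (Fin n → ℝ) × (Fin n → ℝ) =>
        (a q.1).mulVec q.2 ⬝ᵥ q.2 := by
      have : (fun q : (Fin n → ℝ) × (Fin n → ℝ) => (a q.1).mulVec q.2 ⬝ᵥ q.2)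
          = fun q => ∑ i, (∑ j, a q.1 i j * q.2 j) * q.2 i := by
        funext q
        simp [Matrix.mulVec, dotProduct]
      rw [this]
      refine ContDiff.sum fun i _ => ContDiff.mul (ContDiff.sum fun j _ => ?_) ?_
      · exact ((ha i j).comp contDiff_fst).mul (contDiff_pi.mp contDiff_snd j)
      · exact contDiff_pi.mp contDiff_snd i
    have hlin : ContDiff ℝ (⊤:ℕ∞) fun q : (Fin n → ℝ) × (Fin n → ℝ) => b q.1 ⬝ᵥ q.2 := by
      have : (fun q : (Fin n → ℝ) × (Fin n → ℝ) => b q.1 ⬝ᵥ q.2)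
          = fun q => ∑ i, b q.1 i * q.2 i := by
        funext q; simp [dotProduct]
      rw [this]
      exact ContDiff.sum fun i _ =>
        ((contDiff_pi.mp (hb.comp contDiff_fst) i)).mul (contDiff_pi.mp contDiff_snd i)
    exact (hquad.add hlin).add (hc.comp contDiff_fst)
  have hpd : HasFDerivAt p (0 : ((Fin n → ℝ) × (Fin n → ℝ)) →L[ℝ] ℝ) (x₀, ξ₀) := by
    have h := ((hpC.differentiable (by simp)) (x₀, ξ₀)).hasFDerivAt
    rwa [hcrit] at h
  -- the linear term in ξ vanishes
  have hlin0 : ∀ w : Fin n → ℝ, 2 * ((a x₀).mulVec ξ₀ ⬝ᵥ w) + b x₀ ⬝ᵥ w = 0 := by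
    intro w
    have hcw : HasDerivAt (fun s : ℝ => (x₀, ξ₀ + s • w)) ((0 : Fin n → ℝ), w) 0 := by
      have h1 : HasDerivAt (fun s : ℝ => ξ₀ + s • w) w 0 := by
        simpa using ((hasDerivAt_id (0:ℝ)).smul_const w).const_add ξ₀
      exact HasDerivAt.prodMk (hasDerivAt_const (0:ℝ) x₀) h1
    have hcomp : HasDerivAt (fun s : ℝ => p (x₀, ξ₀ + s • w)) 0 0 := by
      have h0 : ((0:ℝ) • w : Fin n → ℝ) = 0 := zero_smul _ _
      have hpd' : HasFDerivAt p (0 : ((Fin n → ℝ) × (Fin n → ℝ)) →L[ℝ] ℝ)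
          ((fun s : ℝ => (x₀, ξ₀ + s • w)) 0) := by
        simpa [h0] using hpd
      simpa [Function.comp_def] using hpd'.comp_hasDerivAt 0 hcw
    have hexp : (fun s : ℝ => p (x₀, ξ₀ + s • w))
        = fun s => p (x₀, ξ₀) + s * (2 * ((a x₀).mulVec ξ₀ ⬝ᵥ w) + b x₀ ⬝ᵥ w)
            + s * s * ((a x₀).mulVec w ⬝ᵥ w) := by
      funext s
      rw [hp x₀ (ξ₀ + s • w), hp x₀ ξ₀, quad_expand (a x₀) (hsymm x₀) ξ₀ (s • w)]
      simp only [dotProduct_add, Matrix.mulVec_smul, smul_dotProduct,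
        dotProduct_smul, smul_eq_mul]
      ring
    have hexp' : HasDerivAt (fun s : ℝ => p (x₀, ξ₀ + s • w))
        (2 * ((a x₀).mulVec ξ₀ ⬝ᵥ w) + b x₀ ⬝ᵥ w) 0 := by
      rw [hexp]
      have h1 : HasDerivAt (fun s : ℝ => s * (2 * ((a x₀).mulVec ξ₀ ⬝ᵥ w) + b x₀ ⬝ᵥ w))
          (2 * ((a x₀).mulVec ξ₀ ⬝ᵥ w) + b x₀ ⬝ᵥ w) 0 := by
        simpa using (hasDerivAt_id (0:ℝ)).mul_const (2 * ((a x₀).mulVec ξ₀ ⬝ᵥ w) + b x₀ ⬝ᵥ w)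
      have h2 : HasDerivAt (fun s : ℝ => s * s * ((a x₀).mulVec w ⬝ᵥ w)) 0 0 := by
        simpa using (((hasDerivAt_id (0:ℝ)).mul (hasDerivAt_id 0)).mul_const
          ((a x₀).mulVec w ⬝ᵥ w))
      simpa [Pi.add_def] using ((h1.const_add (p (x₀, ξ₀))).add h2)
    exact (hcomp.unique hexp').symm
  -- derivative of γ
  have hγat : ContDiffAt ℝ 2 γ 0 := hγ.contDiffAt hIoo
  have hγd : DifferentiableAt ℝ γ 0 := hγat.differentiableAt (by norm_num)
  have hdγ : HasDerivAt γ T 0 := hγd.hasDerivAt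
  have hΔ : (fun t => γ t - (x₀, ξ₀) - t • T) =o[nhds 0] fun t : ℝ => t := by
    have h := hasDerivAt_iff_isLittleO.mp hdγ
    simpa [hγ0] using h
  have hξ2 : (fun t => (γ t).2 - ξ₀ - t • v) =o[nhds 0] fun t : ℝ => t := by
    refine (Asymptotics.isBigO_of_le _ fun t => ?_).trans_isLittleO hΔ
    calc ‖(γ t).2 - ξ₀ - t • v‖ = ‖(γ t - (x₀, ξ₀) - t • T).2‖ := rfl
      _ ≤ ‖γ t - (x₀, ξ₀) - t • T‖ := norm_snd_le _
  have hx1 : (fun t => (γ t).1 - x₀) =o[nhds 0] fun t : ℝ => t := by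
    refine (Asymptotics.isBigO_of_le _ fun t => ?_).trans_isLittleO hΔ
    have e1 : (γ t).1 - x₀ = (γ t - (x₀, ξ₀) - t • T).1 := by
      show (γ t).1 - x₀ = (γ t).1 - x₀ - t • T.1
      rw [hx, smul_zero, sub_zero]
    rw [e1]
    exact norm_fst_le _
  have hsmulv : (fun t : ℝ => t • v) =O[nhds 0] fun t : ℝ => t := by
    refine isBigO_iff.mpr ⟨‖v‖, Eventually.of_forall fun t => ?_⟩
    rw [norm_smul]
    exact le_of_eq (mul_comm _ _)
  have hΔξO : (fun t => (γ t).2 - ξ₀) =O[nhds 0] fun t : ℝ => t := by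
    have h := hξ2.isBigO.add hsmulv
    refine h.congr_left fun t => ?_
    abel
  -- continuity facts
  have hxt : Filter.Tendsto (fun t => (γ t).1) (nhds 0) (nhds x₀) := by
    have h : Filter.Tendsto (fun t => (γ t).1) (nhds 0) (nhds ((γ 0).1)) :=
      (continuous_fst.continuousAt).comp hγd.continuousAt
    simpa [hγ0] using h
  have hξt : Filter.Tendsto (fun t => (γ t).2) (nhds 0) (nhds ξ₀) := by
    have h : Filter.Tendsto (fun t => (γ t).2) (nhds 0) (nhds ((γ 0).2)) :=
      (continuous_snd.continuousAt).comp hγd.continuousAt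
    simpa [hγ0] using h
  -- scalar gauges
  set gx : ℝ → ℝ := fun t => ‖(γ t).1 - x₀‖ with hgxdef
  set gξ : ℝ → ℝ := fun t => ‖(γ t).2 - ξ₀‖ with hgξdef
  set gde : ℝ → ℝ := fun t => ‖(γ t).2 - ξ₀ - t • v‖ with hgdedef
  have hgx : gx =o[nhds 0] fun t : ℝ => t := hx1.norm_left
  have hgξ : gξ =O[nhds 0] fun t : ℝ => t := hΔξO.norm_left
  have hgde : gde =o[nhds 0] fun t : ℝ => t := hξ2.norm_left
  -- the function ψ y = p (y, ξ₀) has vanishing derivative at x₀ and is O(‖y-x₀‖²)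
  set ψ : (Fin n → ℝ) → ℝ := fun y => p (y, ξ₀) with hψdef
  have hψC : ContDiff ℝ (⊤:ℕ∞) ψ := by
    have h1 : ContDiff ℝ (⊤:ℕ∞) (fun y : Fin n → ℝ => (y, ξ₀)) :=
      contDiff_id.prodMk contDiff_const
    exact ContDiff.comp (g := p) (f := fun y : Fin n → ℝ => (y, ξ₀)) hpC h1
  have hψ0 : HasFDerivAt ψ (0 : (Fin n → ℝ) →L[ℝ] ℝ) x₀ := by
    have hι : HasFDerivAt (fun y : Fin n → ℝ => (y, ξ₀))
        ((ContinuousLinearMap.id ℝ (Fin n → ℝ)).prod 0) x₀ :=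
      HasFDerivAt.prodMk (hasFDerivAt_id x₀) (hasFDerivAt_const ξ₀ x₀)
    have h := hpd.comp x₀ hι
    simpa [Function.comp_def] using h
  have hfψ : fderiv ℝ ψ x₀ = 0 := hψ0.fderiv
  have hDψdiff : DifferentiableAt ℝ (fderiv ℝ ψ) x₀ := by
    have h : ContDiff ℝ (1:ℕ∞) (fderiv ℝ ψ) := hψC.fderiv_right (mod_cast le_top)
    exact (h.differentiable (by simp)) x₀
  have hDψO : (fun y => fderiv ℝ ψ y) =O[nhds x₀] fun y => y - x₀ := by
    have h := hDψdiff.isBigO_sub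
    simpa [hfψ] using h
  obtain ⟨Cψ, hCψ⟩ := isBigO_iff.mp hDψO
  obtain ⟨r, hr0, hball⟩ := Metric.eventually_nhds_iff.mp hCψ
  set Cψ' := max Cψ 0 with hCψ'def
  have hψO : (fun y => ψ y - ψ x₀) =O[nhds x₀] fun y => ‖y - x₀‖ * ‖y - x₀‖ := by
    refine isBigO_iff.mpr ⟨Cψ', Metric.eventually_nhds_iff.mpr ⟨r, hr0, fun y hy => ?_⟩⟩
    have hset : Convex ℝ (Metric.ball x₀ r ∩ Metric.closedBall x₀ ‖y - x₀‖) :=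
      (convex_ball x₀ r).inter (convex_closedBall x₀ ‖y - x₀‖)
    have hx₀mem : x₀ ∈ Metric.ball x₀ r ∩ Metric.closedBall x₀ ‖y - x₀‖ :=
      ⟨Metric.mem_ball_self hr0, Metric.mem_closedBall_self (norm_nonneg _)⟩
    have hymem : y ∈ Metric.ball x₀ r ∩ Metric.closedBall x₀ ‖y - x₀‖ := by
      refine ⟨Metric.mem_ball.mpr hy, ?_⟩
      rw [Metric.mem_closedBall, dist_eq_norm]
    have hbound : ∀ z ∈ Metric.ball x₀ r ∩ Metric.closedBall x₀ ‖y - x₀‖,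
        ‖fderiv ℝ ψ z‖ ≤ Cψ' * ‖y - x₀‖ := by
      rintro z ⟨hz1, hz2⟩
      have h1 : ‖fderiv ℝ ψ z‖ ≤ Cψ * ‖z - x₀‖ := by
        have := hball (Metric.mem_ball.mp hz1)
        simpa using this
      have h2 : ‖z - x₀‖ ≤ ‖y - x₀‖ := by
        rw [← dist_eq_norm, ← dist_eq_norm]
        exact Metric.mem_closedBall.mp hz2
      calc ‖fderiv ℝ ψ z‖ ≤ Cψ * ‖z - x₀‖ := h1
        _ ≤ Cψ' * ‖y - x₀‖ := by
            apply mul_le_mul (le_max_left _ _) h2 (norm_nonneg _)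
            exact le_max_right _ _
    have hdiff : ∀ z ∈ Metric.ball x₀ r ∩ Metric.closedBall x₀ ‖y - x₀‖,
        DifferentiableAt ℝ ψ z := fun z _ => (hψC.differentiable (by simp)) z
    have := hset.norm_image_sub_le_of_norm_fderiv_le hdiff hbound hx₀mem hymem
    calc ‖ψ y - ψ x₀‖ ≤ Cψ' * ‖y - x₀‖ * ‖y - x₀‖ := this
      _ ≤ Cψ' * ‖‖y - x₀‖ * ‖y - x₀‖‖ := by
          rw [mul_assoc]
          apply mul_le_mul_of_nonneg_left _ (le_max_right _ _)
          rw [Real.norm_eq_abs, abs_of_nonneg (by positivity)]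
  have hψo : (fun t => ψ ((γ t).1) - ψ x₀) =o[nhds 0] fun t : ℝ => t * t := by
    have h1 := hψO.comp_tendsto hxt
    have h2 : (fun t => gx t * gx t) =o[nhds 0] fun t : ℝ => t * t := hgx.mul hgx
    exact h1.trans_isLittleO h2
  -- asymptotics of the coefficient differences
  have hAO : ∀ i j, (fun t => (a ((γ t).1) - a x₀) i j) =O[nhds 0] gx := by
    intro i j
    have h : (fun t => a ((γ t).1) i j - a x₀ i j) =O[nhds 0] fun t => (γ t).1 - x₀ :=
      (((ha i j).differentiable (by simp)) x₀).isBigO_sub.comp_tendsto hxt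
    have h2 : (fun t => a ((γ t).1) i j - a x₀ i j) =O[nhds 0] gx :=
      (isBigO_norm_right (g' := fun t => (γ t).1 - x₀)).mpr h
    refine h2.congr_left fun t => ?_
    simp [Matrix.sub_apply]
  have hBO : (fun t => b ((γ t).1) - b x₀) =O[nhds 0] gx := by
    have h : (fun t => b ((γ t).1) - b x₀) =O[nhds 0] fun t => (γ t).1 - x₀ :=
      ((hb.differentiable (by simp)) x₀).isBigO_sub.comp_tendsto hxt
    exact (isBigO_norm_right (g' := fun t => (γ t).1 - x₀)).mpr h
  have hξone : (fun t => (γ t).2) =O[nhds 0] fun _ : ℝ => (1:ℝ) := hξt.isBigO_one ℝ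
  have hconstvec : (fun _ : ℝ => ξ₀) =O[nhds 0] fun _ : ℝ => (1:ℝ) :=
    isBigO_const_const ξ₀ one_ne_zero _
  have hΔξgξ : (fun t => (γ t).2 - ξ₀) =O[nhds 0] gξ :=
    (isBigO_norm_right (g' := fun t => (γ t).2 - ξ₀)).mpr (isBigO_refl _ _)
  have hdeO : (fun t => (γ t).2 - ξ₀ - t • v) =O[nhds 0] gde :=
    (isBigO_norm_right (g' := fun t => (γ t).2 - ξ₀ - t • v)).mpr (isBigO_refl _ _)
  have haconst : ∀ i j, (fun _ : ℝ => a x₀ i j) =O[nhds 0] fun _ : ℝ => (1:ℝ) :=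
    fun i j => isBigO_const_const (a x₀ i j) one_ne_zero _
  -- the three correction terms
  have hS1 : (fun t => (a ((γ t).1) - a x₀).mulVec ((γ t).2 - ξ₀) ⬝ᵥ (γ t).2)
      =o[nhds 0] fun t : ℝ => t * t := by
    have h := dot_isBigO (mulVec_isBigO hAO hΔξgξ) hξone
    refine h.trans_isLittleO ?_
    simpa [mul_one] using hgx.mul_isBigO hgξ
  have hS2 : (fun t => (a ((γ t).1) - a x₀).mulVec ξ₀ ⬝ᵥ ((γ t).2 - ξ₀))
      =o[nhds 0] fun t : ℝ => t * t := by
    have h := dot_isBigO (mulVec_isBigO hAO hconstvec) hΔξgξ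
    refine h.trans_isLittleO ?_
    simpa [mul_one] using hgx.mul_isBigO hgξ
  have hS3 : (fun t => (b ((γ t).1) - b x₀) ⬝ᵥ ((γ t).2 - ξ₀))
      =o[nhds 0] fun t : ℝ => t * t :=
    (dot_isBigO hBO hΔξgξ).trans_isLittleO (hgx.mul_isBigO hgξ)
  -- the full correction
  have hR : (fun t => p (γ t) - p (x₀, (γ t).2)) =o[nhds 0] fun t : ℝ => t * t := by
    have hsum := (hψo.add hS1).add (hS2.add hS3)
    refine hsum.congr_left fun t => ?_
    have hpt : p (γ t) = p ((γ t).1, (γ t).2) := by rw [Prod.mk.eta]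
    rw [hpt]
    simp only [hψdef]
    rw [hp (γ t).1 (γ t).2, hp x₀ (γ t).2, hp (γ t).1 ξ₀, hp x₀ ξ₀]
    simp only [Matrix.sub_mulVec, sub_dotProduct, dotProduct_sub,
      Matrix.mulVec_sub]
    ring
  -- the quadratic term along the curve
  have hQ : (fun t => (a x₀).mulVec ((γ t).2 - ξ₀) ⬝ᵥ ((γ t).2 - ξ₀))
      =o[nhds 0] fun t : ℝ => t * t := by
    have hEq : ∀ t ∈ Set.Ioo (-1:ℝ) 1,
        (a x₀).mulVec ((γ t).2 - ξ₀) ⬝ᵥ ((γ t).2 - ξ₀)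
          = -(p (γ t) - p (x₀, (γ t).2)) := by
      intro t ht
      have h1 : p (x₀, (γ t).2)
          = p (x₀, ξ₀)
            + (2 * ((a x₀).mulVec ξ₀ ⬝ᵥ ((γ t).2 - ξ₀)) + b x₀ ⬝ᵥ ((γ t).2 - ξ₀))
            + (a x₀).mulVec ((γ t).2 - ξ₀) ⬝ᵥ ((γ t).2 - ξ₀) := by
        have e : (γ t).2 = ξ₀ + ((γ t).2 - ξ₀) := by abel
        conv_lhs => rw [e]
        rw [hp x₀ (ξ₀ + ((γ t).2 - ξ₀)), hp x₀ ξ₀,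
          quad_expand (a x₀) (hsymm x₀) ξ₀ ((γ t).2 - ξ₀), dotProduct_add]
        ring
      rw [hlin0 ((γ t).2 - ξ₀)] at h1
      have h2 := hconst t ht
      linarith [h1, h2]
    have hQeq : (fun t => (a x₀).mulVec ((γ t).2 - ξ₀) ⬝ᵥ ((γ t).2 - ξ₀))
        =ᶠ[nhds 0] fun t => -(p (γ t) - p (x₀, (γ t).2)) := by
      filter_upwards [hIoo] with t ht
      exact hEq t ht
    exact hQeq.trans_isLittleO hR.neg_left
  -- compare the quadratic term with t² (a x₀ v ⬝ v)
  have hterm1 : (fun t => (a x₀).mulVec ((γ t).2 - ξ₀ - t • v) ⬝ᵥ ((γ t).2 - ξ₀))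
      =o[nhds 0] fun t : ℝ => t * t := by
    have h := dot_isBigO (mulVec_isBigO haconst hdeO) hΔξgξ
    refine h.trans_isLittleO ?_
    simpa [one_mul] using hgde.mul_isBigO hgξ
  have hterm2 : (fun t => (a x₀).mulVec (t • v) ⬝ᵥ ((γ t).2 - ξ₀ - t • v))
      =o[nhds 0] fun t : ℝ => t * t := by
    have h := dot_isBigO (mulVec_isBigO haconst hsmulv) hdeO
    refine h.trans_isLittleO ?_
    have h2 : (fun t : ℝ => t * gde t) =o[nhds 0] fun t : ℝ => t * t :=
      (isBigO_refl (fun t : ℝ => t) _).mul_isLittleO hgde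
    simpa [one_mul] using h2
  have hQv : (fun t => (a x₀).mulVec ((γ t).2 - ξ₀) ⬝ᵥ ((γ t).2 - ξ₀)
        - t * t * ((a x₀).mulVec v ⬝ᵥ v)) =o[nhds 0] fun t : ℝ => t * t := by
    have h := hterm1.add hterm2
    refine h.congr_left fun t => ?_
    simp only [Matrix.mulVec_sub, sub_dotProduct, dotProduct_sub,
      Matrix.mulVec_smul, smul_dotProduct, dotProduct_smul, smul_eq_mul]
    ring
  have hCo : (fun t : ℝ => t * t * ((a x₀).mulVec v ⬝ᵥ v)) =o[nhds 0] fun t : ℝ => t * t := by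
    have h := hQ.sub hQv
    refine h.congr_left fun t => ?_
    ring
  have hC0 : (a x₀).mulVec v ⬝ᵥ v = 0 := by
    by_contra hC
    have h := isLittleO_iff.mp hCo (half_pos (abs_pos.mpr hC))
    obtain ⟨δ, hδ0, hδ⟩ := Metric.eventually_nhds_iff.mp h
    have ht : dist (δ/2) (0:ℝ) < δ := by
      rw [Real.dist_eq, sub_zero, abs_of_pos (by positivity)]
      linarith
    have hb2 := hδ ht
    rw [Real.norm_eq_abs, Real.norm_eq_abs, abs_mul] at hb2
    have htt : (0:ℝ) < |δ/2 * (δ/2)| := abs_pos.mpr (by positivity)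
    have hcc : (0:ℝ) < |(a x₀).mulVec v ⬝ᵥ v| := abs_pos.mpr hC
    have hb3 : |δ/2 * (δ/2)| * |(a x₀).mulVec v ⬝ᵥ v|
        ≤ |δ/2 * (δ/2)| * (|(a x₀).mulVec v ⬝ᵥ v| / 2) := by linarith
    have hb4 := (mul_le_mul_iff_right₀ htt).mp hb3
    linarith
  have hv0 : v = 0 := by
    by_contra hvne
    have h := hpos.dotProduct_mulVec_pos hvne
    rw [star_trivial, dotProduct_comm] at h
    rw [hC0] at h
    exact lt_irrefl 0 h
  rw [Prod.ext_iff]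
  exact ⟨hx, hv0⟩
end

section
/- On ℝ⁴ with coordinates (x, y, ξ, η), let p₀(x,y,ξ,η) = (ξ² − 1)(ξ² − 4) + η⁴ + η² + λ(e^{−y²} − 1) and, for λ > 4, set ξ_λ = √((5 + √(9 + 4λ))/2). Then for every sufficiently large λ there exist cut-off functions χ₁, χ₂, χ₃ ∈ C_c^∞(ℝ; [0,1]), where χ₁ equals 1 near {−1, 1} and is supported sufficiently close to {−1, 1}, χ₂ equals 1 near {−2, 2} and is supported sufficiently close to {−2, 2}, χ₃ equals 1 near {−ξ_λ, ξ_λ} and is supported sufficiently close to {−ξ_λ, ξ_λ}, and a constant c > 0, such that (4ξ⁴ − 10ξ²)(χ₃(ξ) + χ₂(ξ) − χ₁(ξ)) + 4η⁴ + 2η² + 2λ y² e^{−y²} ≥ c for every (x,y,ξ,η) with p₀(x,y,ξ,η) = 0. (The left-hand side equals H_{p₀}G, where G(x,y,ξ,η) = xξ(χ₃(ξ) + χ₂(ξ) − χ₁(ξ)) + yη, so G is an escape function for p₀ at energy 0.) -/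
/-- The symbol `p₀ = (ξ² − 1)(ξ² − 4) + η⁴ + η² + λ(e^{−y²} − 1)` on `ℝ⁴` with
coordinates `((x, y), (ξ, η))`. -/
noncomputable def P7 (lam : ℝ) (ρ : (ℝ × ℝ) × (ℝ × ℝ)) : ℝ :=
  (ρ.2.1 ^ 2 - 1) * (ρ.2.1 ^ 2 - 4) + ρ.2.2 ^ 4 + ρ.2.2 ^ 2
    + lam * (Real.exp (-ρ.1.2 ^ 2) - 1)

/-- `ξ_λ = √((5 + √(9 + 4λ))/2)`. -/
noncomputable def xiLam (lam : ℝ) : ℝ :=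
  Real.sqrt ((5 + Real.sqrt (9 + 4 * lam)) / 2)

/-- Auxiliary bump data at center `a`, equal to `1` on `[a-1/8,a+1/8]`,
supported in `(a-1/4,a+1/4)`. -/
noncomputable def myBump (a : ℝ) : ContDiffBump a :=
  ⟨1/8, 1/4, by norm_num, by norm_num⟩

/-- Even cutoff equal to `1` near `±a` and supported near `±a`. -/
noncomputable def myChi (a : ℝ) : ℝ → ℝ := fun ξ => myBump a ξ + myBump (-a) ξ

lemma myBump_zero {a ξ : ℝ} (h : 1/4 ≤ |ξ - a|) : myBump a ξ = 0 := by
  apply ContDiffBump.zero_of_le_dist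
  rwa [Real.dist_eq, myBump]

lemma myBump_one {a ξ : ℝ} (h : |ξ - a| ≤ 1/8) : myBump a ξ = 1 := by
  apply ContDiffBump.one_of_mem_closedBall
  rwa [Metric.mem_closedBall, Real.dist_eq, myBump]

lemma myChi_contDiff (a : ℝ) : ContDiff ℝ (⊤ : ℕ∞) (myChi a) :=
  ((myBump a).contDiff).add ((myBump (-a)).contDiff)

lemma myChi_compact (a : ℝ) : HasCompactSupport (myChi a) :=
  HasCompactSupport.add (myBump a).hasCompactSupport (myBump (-a)).hasCompactSupport

lemma myChi_zero {a ξ : ℝ} (h1 : 1/4 ≤ |ξ - a|) (h2 : 1/4 ≤ |ξ + a|) : myChi a ξ = 0 := by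
  have : |ξ - -a| = |ξ + a| := by ring_nf
  simp [myChi, myBump_zero h1, myBump_zero (by rw [this]; exact h2)]

lemma myChi_one {a ξ : ℝ} (ha : 1 ≤ a) (h : |ξ - a| ≤ 1/8 ∨ |ξ + a| ≤ 1/8) :
    myChi a ξ = 1 := by
  rcases h with h | h
  · have h1 : ξ - a ≤ 1/8 ∧ -(1/8) ≤ ξ - a := ⟨(abs_le.mp h).2, (abs_le.mp h).1⟩
    have h2 : (1:ℝ)/4 ≤ |ξ - -a| := le_abs.mpr (Or.inl (by linarith))
    simp [myChi, myBump_one h, myBump_zero h2]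
  · have h1 : ξ + a ≤ 1/8 ∧ -(1/8) ≤ ξ + a := ⟨(abs_le.mp h).2, (abs_le.mp h).1⟩
    have h2 : (1:ℝ)/4 ≤ |ξ - a| := le_abs.mpr (Or.inr (by linarith))
    have h3 : |ξ - -a| ≤ 1/8 := by rw [show ξ - -a = ξ + a by ring]; exact h
    simp [myChi, myBump_one h3, myBump_zero h2]

lemma myChi_mem {a : ℝ} (ha : 1 ≤ a) (ξ : ℝ) : myChi a ξ ∈ Set.Icc (0:ℝ) 1 := by
  constructor
  · exact add_nonneg ((myBump a).nonneg) ((myBump (-a)).nonneg)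
  · rcases le_or_gt (1/4) |ξ - a| with h | h
    · have : myBump a ξ = 0 := myBump_zero h
      simpa [myChi, this] using (myBump (-a)).le_one
    · have h1 : ξ - a < 1/4 ∧ -(1/4) < ξ - a := ⟨(abs_lt.mp h).2, (abs_lt.mp h).1⟩
      have h2 : (1:ℝ)/4 ≤ |ξ - -a| := le_abs.mpr (Or.inl (by linarith))
      have : myBump (-a) ξ = 0 := myBump_zero h2
      simpa [myChi, this] using (myBump a).le_one

lemma myChi_eventually {a b : ℝ} (ha : 1 ≤ a) (hb : |b - a| ≤ 1/8 ∨ |b + a| ≤ 1/8)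
    (hb' : ∀ ξ, |ξ - b| < 1/64 → (|ξ - a| ≤ 1/8 ∨ |ξ + a| ≤ 1/8)) :
    ∀ᶠ ξ in nhds b, myChi a ξ = 1 := by
  filter_upwards [Metric.ball_mem_nhds b (by norm_num : (0:ℝ) < 1/64)] with ξ hξ
  rw [Metric.mem_ball, Real.dist_eq] at hξ
  exact myChi_one ha (hb' ξ hξ)

lemma myChi_tsupport (a : ℝ) :
    tsupport (myChi a) ⊆ {ξ : ℝ | |ξ - a| ≤ 1/4 ∨ |ξ + a| ≤ 1/4} := by
  have h : tsupport (myChi a) ⊆ tsupport (myBump a) ∪ tsupport (myBump (-a)) :=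
    tsupport_add (⇑(myBump a)) (⇑(myBump (-a)))
  intro ξ hξ
  rcases h hξ with h' | h'
  · rw [(myBump a).tsupport_eq] at h'
    left
    have := Metric.mem_closedBall.mp h'
    rwa [Real.dist_eq] at this
  · rw [(myBump (-a)).tsupport_eq] at h'
    right
    have := Metric.mem_closedBall.mp h'
    rw [Real.dist_eq] at this
    rwa [show ξ - -a = ξ + a by ring] at this

set_option maxHeartbeats 4000000 in
/-- Escape function at infinity for the order 4 operator: for `λ` large there are smooth
cut-offs `χ₁, χ₂, χ₃` equal to `1` near `{±1}`, `{±2}`, `{±ξ_λ}` respectively and supported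
close to these sets, and `c > 0`, such that
`(4ξ⁴ − 10ξ²)(χ₃ + χ₂ − χ₁)(ξ) + 4η⁴ + 2η² + 2λy²e^{−y²} ≥ c` on `p₀⁻¹(0)`. -/
theorem stmt_7 :
    ∃ lam0 : ℝ, 0 < lam0 ∧ ∀ lam : ℝ, lam0 ≤ lam →
      ∃ (χ₁ χ₂ χ₃ : ℝ → ℝ) (c : ℝ), 0 < c ∧
        ContDiff ℝ (⊤ : ℕ∞) χ₁ ∧ ContDiff ℝ (⊤ : ℕ∞) χ₂ ∧ ContDiff ℝ (⊤ : ℕ∞) χ₃ ∧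
        HasCompactSupport χ₁ ∧ HasCompactSupport χ₂ ∧ HasCompactSupport χ₃ ∧
        (∀ ξ, χ₁ ξ ∈ Set.Icc (0 : ℝ) 1) ∧ (∀ ξ, χ₂ ξ ∈ Set.Icc (0 : ℝ) 1) ∧
        (∀ ξ, χ₃ ξ ∈ Set.Icc (0 : ℝ) 1) ∧
        (∀ᶠ ξ in nhds (1 : ℝ), χ₁ ξ = 1) ∧ (∀ᶠ ξ in nhds (-1 : ℝ), χ₁ ξ = 1) ∧
        (∀ᶠ ξ in nhds (2 : ℝ), χ₂ ξ = 1) ∧ (∀ᶠ ξ in nhds (-2 : ℝ), χ₂ ξ = 1) ∧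
        (∀ᶠ ξ in nhds (xiLam lam), χ₃ ξ = 1) ∧ (∀ᶠ ξ in nhds (-xiLam lam), χ₃ ξ = 1) ∧
        tsupport χ₁ ⊆ {ξ : ℝ | |ξ - 1| ≤ 1 / 4 ∨ |ξ + 1| ≤ 1 / 4} ∧
        tsupport χ₂ ⊆ {ξ : ℝ | |ξ - 2| ≤ 1 / 4 ∨ |ξ + 2| ≤ 1 / 4} ∧
        tsupport χ₃ ⊆ {ξ : ℝ | |ξ - xiLam lam| ≤ 1 / 4 ∨ |ξ + xiLam lam| ≤ 1 / 4} ∧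
        ∀ x y ξ η : ℝ, P7 lam ((x, y), (ξ, η)) = 0 →
          c ≤ (4 * ξ ^ 4 - 10 * ξ ^ 2) * (χ₃ ξ + χ₂ ξ - χ₁ ξ)
                + 4 * η ^ 4 + 2 * η ^ 2 + 2 * lam * y ^ 2 * Real.exp (-y ^ 2) := by
  refine ⟨100, by norm_num, fun lam hlam => ?_⟩
  have hlam0 : (0:ℝ) ≤ 9 + 4 * lam := by linarith
  set s : ℝ := Real.sqrt (9 + 4 * lam) with hs_def
  have hs0 : 0 ≤ s := Real.sqrt_nonneg _
  have hs2 : s ^ 2 = 9 + 4 * lam := Real.sq_sqrt hlam0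
  have hs20 : 20 ≤ s := by
    by_contra hcon
    push_neg at hcon
    have h9 : s * s < 20 * 20 := mul_lt_mul'' hcon hcon hs0 hs0
    linarith [hs2, pow_two s]
  set t : ℝ := xiLam lam with ht_def
  have ht0 : 0 ≤ t := Real.sqrt_nonneg _
  have ht2 : t ^ 2 = (5 + s) / 2 := Real.sq_sqrt (by linarith)
  have ht35 : 3.5 ≤ t := by
    by_contra hcon
    push_neg at hcon
    have h9 : t * t < 3.5 * 3.5 := mul_lt_mul'' hcon hcon ht0 ht0
    linarith [ht2, pow_two t, hs20]
  have ht1 : (1:ℝ) ≤ t := by linarith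
  clear_value s t
  refine ⟨myChi 1, myChi 2, myChi t, 1/10000, by norm_num,
    myChi_contDiff 1, myChi_contDiff 2, myChi_contDiff t,
    myChi_compact 1, myChi_compact 2, myChi_compact t,
    myChi_mem le_rfl, myChi_mem (by norm_num), myChi_mem ht1,
    myChi_eventually le_rfl (Or.inl (by norm_num)) (fun ξ h => Or.inl (by
      rw [abs_lt] at h; rw [abs_le]; exact ⟨by linarith [h.1], by linarith [h.2]⟩)),
    myChi_eventually le_rfl (Or.inr (by norm_num)) (fun ξ h => Or.inr (by
      rw [abs_lt] at h; rw [abs_le]; exact ⟨by linarith [h.1], by linarith [h.2]⟩)),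
    myChi_eventually (by norm_num) (Or.inl (by norm_num)) (fun ξ h => Or.inl (by
      rw [abs_lt] at h; rw [abs_le]; exact ⟨by linarith [h.1], by linarith [h.2]⟩)),
    myChi_eventually (by norm_num) (Or.inr (by norm_num)) (fun ξ h => Or.inr (by
      rw [abs_lt] at h; rw [abs_le]; exact ⟨by linarith [h.1], by linarith [h.2]⟩)),
    myChi_eventually ht1 (Or.inl (by rw [sub_self, abs_zero]; norm_num)) (fun ξ h => Or.inl (by
      rw [abs_lt] at h; rw [abs_le]; exact ⟨by linarith [h.1], by linarith [h.2]⟩)),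
    myChi_eventually ht1 (Or.inr (by rw [neg_add_cancel, abs_zero]; norm_num)) (fun ξ h => Or.inr (by
      rw [abs_lt] at h; rw [abs_le]; exact ⟨by linarith [h.1], by linarith [h.2]⟩)),
    myChi_tsupport 1, myChi_tsupport 2, myChi_tsupport t, ?_⟩
  -- the main inequality
  intro x y ξ η hp
  simp only [P7] at hp
  set E : ℝ := Real.exp (-y ^ 2) with hE_def
  have hE0 : 0 < E := Real.exp_pos _
  have hE1 : E ≤ 1 := Real.exp_le_one_iff.mpr (neg_nonpos.mpr (sq_nonneg y))
  have hEy : 1 - E ≤ y ^ 2 := by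
    have := Real.add_one_le_exp (-y ^ 2)
    linarith
  have hη4 : 0 ≤ η ^ 4 := by positivity
  have hη2 : 0 ≤ η ^ 2 := sq_nonneg η
  have hy2 : 0 ≤ y ^ 2 := sq_nonneg y
  have hyE : 0 ≤ 2 * lam * y ^ 2 * E := by
    have : (0:ℝ) ≤ lam := by linarith
    positivity
  clear_value E
  -- nonnegativity of the cutoff term
  have hT : 0 ≤ (4 * ξ ^ 4 - 10 * ξ ^ 2) * (myChi t ξ + myChi 2 ξ - myChi 1 ξ) := by
    have e1 : 0 ≤ (10 * ξ ^ 2 - 4 * ξ ^ 4) * myChi 1 ξ := by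
      rcases le_or_gt (1/4) |ξ - 1| with h1 | h1
      · rcases le_or_gt (1/4) |ξ + 1| with h2 | h2
        · simp [myChi_zero h1 h2]
        · rcases abs_lt.mp h2 with ⟨ha, hb⟩
          apply mul_nonneg _ (myChi_mem le_rfl ξ).1
          have p2 : (0:ℝ) ≤ (5/4 - ξ) * (5/4 + ξ) :=
            mul_nonneg (by linarith) (by linarith)
          linarith [mul_nonneg (sq_nonneg ξ) (show (0:ℝ) ≤ 5 - 2 * ξ ^ 2 by linarith)]
      · rcases abs_lt.mp h1 with ⟨ha, hb⟩
        apply mul_nonneg _ (myChi_mem le_rfl ξ).1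
        have p2 : (0:ℝ) ≤ (5/4 - ξ) * (5/4 + ξ) :=
          mul_nonneg (by linarith) (by linarith)
        linarith [mul_nonneg (sq_nonneg ξ) (show (0:ℝ) ≤ 5 - 2 * ξ ^ 2 by linarith)]
    have e2 : 0 ≤ (4 * ξ ^ 4 - 10 * ξ ^ 2) * myChi 2 ξ := by
      rcases le_or_gt (1/4) |ξ - 2| with h1 | h1
      · rcases le_or_gt (1/4) |ξ + 2| with h2 | h2
        · simp [myChi_zero h1 h2]
        · rcases abs_lt.mp h2 with ⟨ha, hb⟩
          apply mul_nonneg _ (myChi_mem (by norm_num) ξ).1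
          have p1 : (0:ℝ) ≤ (-ξ - 7/4) * (-ξ + 7/4) :=
            mul_nonneg (by linarith) (by linarith)
          linarith [mul_nonneg (sq_nonneg ξ) (show (0:ℝ) ≤ 2 * ξ ^ 2 - 5 by linarith)]
      · rcases abs_lt.mp h1 with ⟨ha, hb⟩
        apply mul_nonneg _ (myChi_mem (by norm_num) ξ).1
        have p1 : (0:ℝ) ≤ (ξ - 7/4) * (ξ + 7/4) :=
          mul_nonneg (by linarith) (by linarith)
        linarith [mul_nonneg (sq_nonneg ξ) (show (0:ℝ) ≤ 2 * ξ ^ 2 - 5 by linarith)]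
    have e3 : 0 ≤ (4 * ξ ^ 4 - 10 * ξ ^ 2) * myChi t ξ := by
      rcases le_or_gt (1/4) |ξ - t| with h1 | h1
      · rcases le_or_gt (1/4) |ξ + t| with h2 | h2
        · simp [myChi_zero h1 h2]
        · rcases abs_lt.mp h2 with ⟨ha, hb⟩
          apply mul_nonneg _ (myChi_mem ht1 ξ).1
          have p1 : (0:ℝ) ≤ (-ξ - 3) * (-ξ + 3) :=
            mul_nonneg (by linarith) (by linarith)
          linarith [mul_nonneg (sq_nonneg ξ) (show (0:ℝ) ≤ 2 * ξ ^ 2 - 5 by linarith)]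
      · rcases abs_lt.mp h1 with ⟨ha, hb⟩
        apply mul_nonneg _ (myChi_mem ht1 ξ).1
        have p1 : (0:ℝ) ≤ (ξ - 3) * (ξ + 3) :=
          mul_nonneg (by linarith) (by linarith)
        linarith [mul_nonneg (sq_nonneg ξ) (show (0:ℝ) ≤ 2 * ξ ^ 2 - 5 by linarith)]
    linarith [e1, e2, e3]
  by_cases hη : 1/10000 ≤ 4 * η ^ 4 + 2 * η ^ 2
  · linarith
  by_cases hy : 1/10000 ≤ 2 * lam * y ^ 2 * E
  · linarith
  push_neg at hη hy
  clear hT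
  rcases le_or_gt (y ^ 2) 1 with hy1 | hy1
  · -- small y: ξ is near ±1 or ±2
    have hEe : (1:ℝ)/3 ≤ E := by
      have h1 : Real.exp (-1 : ℝ) ≤ E := by
        rw [hE_def]; exact Real.exp_le_exp.mpr (by linarith)
      have h2 : Real.exp (1:ℝ) ≤ 3 := by
        have := Real.exp_one_lt_d9
        linarith
      have h3 : Real.exp (-1:ℝ) = (Real.exp 1)⁻¹ := by
        rw [Real.exp_neg]
      have h4 : (0:ℝ) < Real.exp 1 := Real.exp_pos _
      have : (1:ℝ)/3 ≤ (Real.exp 1)⁻¹ := by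
        rw [div_le_iff₀ (by norm_num), inv_mul_eq_div, le_div_iff₀ h4]
        linarith
      linarith [h3 ▸ h1]
    have hlamy : (0:ℝ) ≤ lam * y ^ 2 := mul_nonneg (by linarith) hy2
    have hly2 : lam * y ^ 2 < 3/2 * (1/10000) := by
      have h := mul_nonneg (show (0:ℝ) ≤ E - 1/3 by linarith) hlamy
      linarith [h, hy]
    have hq_up : (ξ ^ 2 - 1) * (ξ ^ 2 - 4) < 3/2 * (1/10000) := by
      have h := mul_nonneg (show (0:ℝ) ≤ lam by linarith)
        (show (0:ℝ) ≤ y ^ 2 - (1 - E) by linarith)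
      linarith [h, hη4, hη2, hly2, hp]
    have hq_lo : -(1/10000 : ℝ) < (ξ ^ 2 - 1) * (ξ ^ 2 - 4) := by
      have h := mul_nonneg (show (0:ℝ) ≤ lam by linarith)
        (show (0:ℝ) ≤ 1 - E by linarith)
      linarith [h, hη, hp]
    have hnear : |ξ - 1| ≤ 1/8 ∨ |ξ + 1| ≤ 1/8 ∨ |ξ - 2| ≤ 1/8 ∨ |ξ + 2| ≤ 1/8 := by
      by_contra h
      push_neg at h
      obtain ⟨h1, h2, h3, h4⟩ := h
      have e1 : (1:ℝ)/64 ≤ |ξ ^ 2 - 1| := by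
        rw [show ξ ^ 2 - 1 = (ξ - 1) * (ξ + 1) by ring, abs_mul]
        calc (1:ℝ)/64 = 1/8 * (1/8) := by norm_num
        _ ≤ |ξ - 1| * |ξ + 1| :=
          mul_le_mul h1.le h2.le (by norm_num) (le_trans (by norm_num) h1.le)
      have e2 : (1:ℝ)/64 ≤ |ξ ^ 2 - 4| := by
        rw [show ξ ^ 2 - 4 = (ξ - 2) * (ξ + 2) by ring, abs_mul]
        calc (1:ℝ)/64 = 1/8 * (1/8) := by norm_num
        _ ≤ |ξ - 2| * |ξ + 2| :=
          mul_le_mul h3.le h4.le (by norm_num) (le_trans (by norm_num) h3.le)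
      have e3 : (1:ℝ)/4096 ≤ |(ξ ^ 2 - 1) * (ξ ^ 2 - 4)| := by
        rw [abs_mul]
        calc (1:ℝ)/4096 = 1/64 * (1/64) := by norm_num
        _ ≤ |ξ ^ 2 - 1| * |ξ ^ 2 - 4| :=
          mul_le_mul e1 e2 (by norm_num) (le_trans (by norm_num) e1)
      have e4 : |(ξ ^ 2 - 1) * (ξ ^ 2 - 4)| ≤ 3/2 * (1/10000) :=
        abs_le.mpr ⟨by linarith, by linarith⟩
      linarith
    rcases hnear with h | h | h | h
    · obtain ⟨ha, hb⟩ := abs_le.mp h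
      have c1 : myChi 1 ξ = 1 := myChi_one le_rfl (Or.inl h)
      have c2 : myChi 2 ξ = 0 := myChi_zero
        (le_abs.mpr (Or.inr (by linarith))) (le_abs.mpr (Or.inl (by linarith)))
      have c3 : myChi t ξ = 0 := myChi_zero
        (le_abs.mpr (Or.inr (by linarith))) (le_abs.mpr (Or.inl (by linarith)))
      rw [c1, c2, c3]
      have p1 : (0:ℝ) ≤ (ξ - 7/8) * (ξ + 7/8) := mul_nonneg (by linarith) (by linarith)
      have p2 : (0:ℝ) ≤ (9/8 - ξ) * (9/8 + ξ) := mul_nonneg (by linarith) (by linarith)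
      have p3 := mul_nonneg p1 p2
      linarith [p1, p2, p3, hη4, hη2, hyE]
    · obtain ⟨ha, hb⟩ := abs_le.mp h
      have c1 : myChi 1 ξ = 1 := myChi_one le_rfl (Or.inr h)
      have c2 : myChi 2 ξ = 0 := myChi_zero
        (le_abs.mpr (Or.inr (by linarith))) (le_abs.mpr (Or.inl (by linarith)))
      have c3 : myChi t ξ = 0 := myChi_zero
        (le_abs.mpr (Or.inr (by linarith))) (le_abs.mpr (Or.inl (by linarith)))
      rw [c1, c2, c3]
      have p1 : (0:ℝ) ≤ (-ξ - 7/8) * (-ξ + 7/8) := mul_nonneg (by linarith) (by linarith)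
      have p2 : (0:ℝ) ≤ (9/8 + ξ) * (9/8 - ξ) := mul_nonneg (by linarith) (by linarith)
      have p3 := mul_nonneg p1 p2
      linarith [p1, p2, p3, hη4, hη2, hyE]
    · obtain ⟨ha, hb⟩ := abs_le.mp h
      have c1 : myChi 1 ξ = 0 := myChi_zero
        (le_abs.mpr (Or.inl (by linarith))) (le_abs.mpr (Or.inl (by linarith)))
      have c2 : myChi 2 ξ = 1 := myChi_one (by norm_num) (Or.inl h)
      have c3 : myChi t ξ = 0 := myChi_zero
        (le_abs.mpr (Or.inr (by linarith))) (le_abs.mpr (Or.inl (by linarith)))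
      rw [c1, c2, c3]
      have p1 : (0:ℝ) ≤ (ξ - 15/8) * (ξ + 15/8) := mul_nonneg (by linarith) (by linarith)
      linarith [p1, sq_nonneg (ξ ^ 2 - 225/64), hη4, hη2, hyE]
    · obtain ⟨ha, hb⟩ := abs_le.mp h
      have c1 : myChi 1 ξ = 0 := myChi_zero
        (le_abs.mpr (Or.inr (by linarith))) (le_abs.mpr (Or.inr (by linarith)))
      have c2 : myChi 2 ξ = 1 := myChi_one (by norm_num) (Or.inr h)
      have c3 : myChi t ξ = 0 := myChi_zero
        (le_abs.mpr (Or.inr (by linarith))) (le_abs.mpr (Or.inl (by linarith)))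
      rw [c1, c2, c3]
      have p1 : (0:ℝ) ≤ (-ξ - 15/8) * (-ξ + 15/8) := mul_nonneg (by linarith) (by linarith)
      linarith [p1, sq_nonneg (ξ ^ 2 - 225/64), hη4, hη2, hyE]
  · -- large y: ξ is near ±ξ_λ
    have hlamE : 0 ≤ lam * E := mul_nonneg (by linarith) hE0.le
    have hlE : lam * E < 1/2 * (1/10000) := by
      have h := mul_nonneg hlamE (show (0:ℝ) ≤ y ^ 2 - 1 by linarith)
      linarith [h, hy]
    have key : lam - (ξ ^ 2 - 1) * (ξ ^ 2 - 4)
        = (t ^ 2 - ξ ^ 2) * (ξ ^ 2 + (s - 5) / 2) := by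
      linear_combination (-(ξ ^ 2 + (s - 5) / 2)) * ht2 - (1/4) * hs2
    have hdiff_lo : 0 ≤ lam - (ξ ^ 2 - 1) * (ξ ^ 2 - 4) := by
      linarith [hlamE, hη4, hη2]
    have hdiff_up : lam - (ξ ^ 2 - 1) * (ξ ^ 2 - 4) ≤ 3/2 * (1/10000) := by
      linarith [hlE, hη]
    have hF : (15:ℝ)/2 ≤ ξ ^ 2 + (s - 5) / 2 := by
      have := sq_nonneg ξ; linarith
    have hFpos : (0:ℝ) < ξ ^ 2 + (s - 5) / 2 := by linarith
    have hd1 : 0 ≤ t ^ 2 - ξ ^ 2 := by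
      by_contra h
      push_neg at h
      have h2 : (t ^ 2 - ξ ^ 2) * (ξ ^ 2 + (s - 5) / 2) < 0 :=
        mul_neg_of_neg_of_pos h hFpos
      linarith [key, hdiff_lo]
    have hd2 : t ^ 2 - ξ ^ 2 ≤ 1/10000 := by
      by_contra h
      push_neg at h
      have h2 : (1/10000 : ℝ) * (15/2) ≤ (t ^ 2 - ξ ^ 2) * (ξ ^ 2 + (s - 5) / 2) :=
        mul_le_mul h.le hF (by norm_num) (by linarith)
      linarith [key, hdiff_up]
    have hξ2 : (12:ℝ) ≤ ξ ^ 2 := by linarith [ht2, hs20, hd2]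
    have hnear : |ξ - t| ≤ 1/8 ∨ |ξ + t| ≤ 1/8 := by
      rcases le_or_gt 0 ξ with hξ0 | hξ0
      · left
        have hξ3 : (3:ℝ) ≤ ξ := by
          by_contra hcon
          push_neg at hcon
          have h9 : ξ * ξ < 3 * 3 := mul_lt_mul'' hcon hcon hξ0 hξ0
          linarith [hξ2, pow_two ξ]
        have hts : (t - ξ) * (t + ξ) ≤ 1/10000 := by linarith [hd2]
        have ht' : ξ ≤ t := by
          by_contra hcon
          push_neg at hcon
          have h9 : t * t < ξ * ξ := mul_lt_mul'' hcon hcon ht0 ht0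
          linarith [hd1, pow_two t, pow_two ξ]
        have h18 : t - ξ ≤ 1/8 := by
          by_contra h
          push_neg at h
          have h2 : (1/8 : ℝ) * (13/2) ≤ (t - ξ) * (t + ξ) :=
            mul_le_mul h.le (by linarith) (by norm_num) (by linarith)
          linarith
        rw [abs_le]
        constructor <;> linarith
      · right
        have hξ3 : ξ ≤ -3 := by
          by_contra hcon
          push_neg at hcon
          have h9 : -ξ * -ξ < 3 * 3 :=
            mul_lt_mul'' (by linarith) (by linarith) (by linarith) (by linarith)
          linarith [hξ2, pow_two ξ]
        have hts : (-ξ - t) * (-ξ + t) ≤ 1/10000 := by linarith [hd2]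
        have ht' : -ξ ≤ t := by
          by_contra hcon
          push_neg at hcon
          have h9 : t * t < -ξ * -ξ := mul_lt_mul'' hcon hcon ht0 ht0
          linarith [hd1, pow_two t, pow_two ξ]
        have h18 : t + ξ ≤ 1/8 := by
          by_contra h
          push_neg at h
          have h2 : (1/8 : ℝ) * (13/2) ≤ (t + ξ) * (t - ξ) :=
            mul_le_mul h.le (by linarith) (by norm_num) (by linarith)
          nlinarith [h2, hd2]
        rw [abs_le]
        constructor <;> linarith
    have habs : (3:ℝ) ≤ |ξ| := by
      by_contra hcon
      push_neg at hcon
      have h0 : 0 ≤ |ξ| := abs_nonneg ξ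
      have h9 : |ξ| * |ξ| < 3 * 3 := mul_lt_mul'' hcon hcon h0 h0
      rw [abs_mul_abs_self] at h9
      linarith [hξ2, pow_two ξ]
    have c3 : myChi t ξ = 1 := myChi_one ht1 hnear
    have c1 : myChi 1 ξ = 0 := by
      rcases le_or_gt 0 ξ with hξ0 | hξ0
      · have : (3:ℝ) ≤ ξ := (abs_of_nonneg hξ0) ▸ habs
        exact myChi_zero (le_abs.mpr (Or.inl (by linarith)))
          (le_abs.mpr (Or.inl (by linarith)))
      · have : ξ ≤ -3 := by have := (abs_of_neg hξ0) ▸ habs; linarith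
        exact myChi_zero (le_abs.mpr (Or.inr (by linarith)))
          (le_abs.mpr (Or.inr (by linarith)))
    have c2 : myChi 2 ξ = 0 := by
      rcases le_or_gt 0 ξ with hξ0 | hξ0
      · have : (3:ℝ) ≤ ξ := (abs_of_nonneg hξ0) ▸ habs
        exact myChi_zero (le_abs.mpr (Or.inl (by linarith)))
          (le_abs.mpr (Or.inl (by linarith)))
      · have : ξ ≤ -3 := by have := (abs_of_neg hξ0) ▸ habs; linarith
        exact myChi_zero (le_abs.mpr (Or.inr (by linarith)))
          (le_abs.mpr (Or.inr (by linarith)))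
    rw [c1, c2, c3]
    linarith [mul_self_nonneg (ξ ^ 2 - 12), hξ2, hη4, hη2, hyE]
end

section
/- Let h : [−1, 1] → ℝ be C¹ with h(0) = 0, h(s) > 0 for s ≠ 0, and s·h′(s) > 0 for s ≠ 0. Let χ : ℝ → [0, 1] be C¹ with χ(s) = 1 if and only if |s| ≤ 1/2, χ(s) = 0 for |s| ≥ 1, and s·χ′(s) ≤ 0 for all s. Let g : ℝ → ℝ be continuous, set G(s) = ∫₀^s u·g(u)² du, and let c > 0 satisfy c|G(s)| ≤ h(s)/2 whenever 1/2 ≤ |s| ≤ 1. Define D(s) = h′(s)(χ(s) − 1) − c·s·g(s)²·χ(s) + (h(s) − c·G(s))χ′(s) for s ∈ [−1, 1]. Then D(s) ≤ 0 for s ∈ [0, 1], D(s) ≥ 0 for s ∈ [−1, 0], and D(s) = 0 if and only if |s| ≤ 1/2 and s·g(s)² = 0. -/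
/-- Sign analysis of `D = h′(χ − 1) − c·s·g(s)²·χ + (h − c·G)χ′` on `[−1,1]`, where
`G(s) = ∫₀^s u g(u)² du`: `D ≤ 0` on `[0,1]`, `D ≥ 0` on `[−1,0]`, and `D = 0` exactly on
`{|s| ≤ 1/2 and s·g(s)² = 0}`. -/
theorem stmt_12 (h h' χ χ' g : ℝ → ℝ) (c : ℝ)
    (hderiv : ∀ s ∈ Set.Icc (-1 : ℝ) 1, HasDerivWithinAt h (h' s) (Set.Icc (-1) 1) s)
    (hcont : ContinuousOn h' (Set.Icc (-1 : ℝ) 1))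
    (h0 : h 0 = 0)
    (hpos : ∀ s ∈ Set.Icc (-1 : ℝ) 1, s ≠ 0 → 0 < h s)
    (hmono : ∀ s ∈ Set.Icc (-1 : ℝ) 1, s ≠ 0 → 0 < s * h' s)
    (hχderiv : ∀ s, HasDerivAt χ (χ' s) s)
    (hχcont : Continuous χ')
    (hχ01 : ∀ s, χ s ∈ Set.Icc (0 : ℝ) 1)
    (hχ1 : ∀ s, χ s = 1 ↔ |s| ≤ 1 / 2)
    (hχ0 : ∀ s, 1 ≤ |s| → χ s = 0)
    (hχ' : ∀ s, s * χ' s ≤ 0)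
    (hg : Continuous g)
    (hc : 0 < c)
    (hcG : ∀ s : ℝ, 1 / 2 ≤ |s| → |s| ≤ 1 →
      c * |∫ u in (0 : ℝ)..s, u * g u ^ 2| ≤ h s / 2) :
    (∀ s ∈ Set.Icc (0 : ℝ) 1,
        h' s * (χ s - 1) - c * s * g s ^ 2 * χ s
          + (h s - c * ∫ u in (0 : ℝ)..s, u * g u ^ 2) * χ' s ≤ 0) ∧
    (∀ s ∈ Set.Icc (-1 : ℝ) 0,
        0 ≤ h' s * (χ s - 1) - c * s * g s ^ 2 * χ s
          + (h s - c * ∫ u in (0 : ℝ)..s, u * g u ^ 2) * χ' s) ∧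
    (∀ s ∈ Set.Icc (-1 : ℝ) 1,
        (h' s * (χ s - 1) - c * s * g s ^ 2 * χ s
          + (h s - c * ∫ u in (0 : ℝ)..s, u * g u ^ 2) * χ' s = 0 ↔
        |s| ≤ 1 / 2 ∧ s * g s ^ 2 = 0)) := by

  have hχ'0 : ∀ s, χ s = 1 → χ' s = 0 := by
    intro s hs
    have hmax : IsLocalMax χ s := by
      apply Filter.Eventually.of_forall
      intro t
      rw [hs]
      exact (hχ01 t).2
    exact hmax.hasDerivAt_eq_zero (hχderiv s)
  -- positive side
  have mainp : ∀ s ∈ Set.Icc (0:ℝ) 1,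
      h' s * (χ s - 1) ≤ 0 ∧ 0 ≤ c * s * g s ^ 2 * χ s ∧
      (h s - c * ∫ u in (0:ℝ)..s, u * g u ^ 2) * χ' s ≤ 0 := by
    intro s hs
    have hsI : s ∈ Set.Icc (-1:ℝ) 1 := ⟨by linarith [hs.1], hs.2⟩
    refine ⟨?_, ?_, ?_⟩
    · rcases eq_or_lt_of_le hs.1 with h0s | h0s
      · have : χ s = 1 := (hχ1 s).2 (by rw [← h0s]; norm_num)
        rw [this]; simp
      · have hh' : 0 < h' s := by
          have := hmono s hsI (by linarith)
          nlinarith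
        have : χ s - 1 ≤ 0 := by linarith [(hχ01 s).2]
        exact mul_nonpos_of_nonneg_of_nonpos hh'.le this
    · apply mul_nonneg
      apply mul_nonneg (mul_nonneg hc.le hs.1) (sq_nonneg _)
      exact (hχ01 s).1
    · rcases le_or_gt s (1/2) with hhalf | hhalf
      · have hχs : χ s = 1 := (hχ1 s).2 (by rw [abs_of_nonneg hs.1]; exact hhalf)
        rw [hχ'0 s hχs, mul_zero]
      · have habs : |s| = s := abs_of_nonneg hs.1
        have hG := hcG s (by rw [habs]; linarith) (by rw [habs]; exact hs.2)
        have hGle : c * (∫ u in (0:ℝ)..s, u * g u ^ 2) ≤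
            c * |∫ u in (0:ℝ)..s, u * g u ^ 2| :=
          mul_le_mul_of_nonneg_left (le_abs_self _) hc.le
        have hhs : 0 < h s := hpos s hsI (by linarith)
        have hχ'le : χ' s ≤ 0 := by nlinarith [hχ' s]
        apply mul_nonpos_of_nonneg_of_nonpos _ hχ'le
        linarith
  -- negative side
  have mainn : ∀ s ∈ Set.Icc (-1:ℝ) 0,
      0 ≤ h' s * (χ s - 1) ∧ c * s * g s ^ 2 * χ s ≤ 0 ∧
      0 ≤ (h s - c * ∫ u in (0:ℝ)..s, u * g u ^ 2) * χ' s := by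
    intro s hs
    have hsI : s ∈ Set.Icc (-1:ℝ) 1 := ⟨hs.1, by linarith [hs.2]⟩
    refine ⟨?_, ?_, ?_⟩
    · rcases eq_or_lt_of_le hs.2 with h0s | h0s
      · have : χ s = 1 := (hχ1 s).2 (by rw [h0s]; norm_num)
        rw [this]; simp
      · have hh' : h' s < 0 := by
          have := hmono s hsI (by linarith)
          nlinarith
        have : χ s - 1 ≤ 0 := by linarith [(hχ01 s).2]
        nlinarith
    · apply mul_nonpos_of_nonpos_of_nonneg _ (hχ01 s).1
      have : c * s ≤ 0 := mul_nonpos_of_nonneg_of_nonpos hc.le hs.2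
      exact mul_nonpos_of_nonpos_of_nonneg this (sq_nonneg _)
    · rcases le_or_gt (-(1/2)) s with hhalf | hhalf
      · have hχs : χ s = 1 := (hχ1 s).2 (by rw [abs_of_nonpos hs.2]; linarith)
        rw [hχ'0 s hχs, mul_zero]
      · have habs : |s| = -s := abs_of_nonpos hs.2
        have hG := hcG s (by rw [habs]; linarith) (by rw [habs]; linarith [hs.1])
        have hGle : c * (∫ u in (0:ℝ)..s, u * g u ^ 2) ≤
            c * |∫ u in (0:ℝ)..s, u * g u ^ 2| :=
          mul_le_mul_of_nonneg_left (le_abs_self _) hc.le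
        have hhs : 0 < h s := hpos s hsI (by linarith)
        have hχ'ge : 0 ≤ χ' s := by nlinarith [hχ' s]
        exact mul_nonneg (by linarith) hχ'ge
  refine ⟨?_, ?_, ?_⟩
  · intro s hs
    obtain ⟨hA, hB, hC⟩ := mainp s hs
    linarith
  · intro s hs
    obtain ⟨hA, hB, hC⟩ := mainn s hs
    linarith
  · intro s hs
    constructor
    · intro hD
      rcases le_or_gt 0 s with h0s | h0s
      · obtain ⟨hA, hB, hC⟩ := mainp s ⟨h0s, hs.2⟩
        have hA0 : h' s * (χ s - 1) = 0 := by linarith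
        have hB0 : c * s * g s ^ 2 * χ s = 0 := by linarith
        have hhalf : |s| ≤ 1/2 := by
          by_contra hcon
          rw [abs_of_nonneg h0s] at hcon
          push_neg at hcon
          have hχlt : χ s < 1 := lt_of_le_of_ne (hχ01 s).2
            (fun he => by
              have := (hχ1 s).1 he
              rw [abs_of_nonneg h0s] at this
              linarith)
          have hh' : 0 < h' s := by
            have := hmono s hs (by linarith)
            nlinarith
          nlinarith
        refine ⟨hhalf, ?_⟩
        have hχs : χ s = 1 := (hχ1 s).2 hhalf
        rw [hχs, mul_one] at hB0
        have : c * (s * g s ^ 2) = 0 := by linear_combination hB0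
        rcases mul_eq_zero.1 this with hc0 | hsg
        · exact absurd hc0 hc.ne'
        · exact hsg
      · obtain ⟨hA, hB, hC⟩ := mainn s ⟨hs.1, h0s.le⟩
        have hA0 : h' s * (χ s - 1) = 0 := by linarith
        have hB0 : c * s * g s ^ 2 * χ s = 0 := by linarith
        have hhalf : |s| ≤ 1/2 := by
          by_contra hcon
          rw [abs_of_nonpos h0s.le] at hcon
          push_neg at hcon
          have hχlt : χ s < 1 := lt_of_le_of_ne (hχ01 s).2
            (fun he => by
              have := (hχ1 s).1 he
              rw [abs_of_nonpos h0s.le] at this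
              linarith)
          have hh' : h' s < 0 := by
            have := hmono s hs (by linarith)
            nlinarith
          nlinarith
        refine ⟨hhalf, ?_⟩
        have hχs : χ s = 1 := (hχ1 s).2 hhalf
        rw [hχs, mul_one] at hB0
        have : c * (s * g s ^ 2) = 0 := by linear_combination hB0
        rcases mul_eq_zero.1 this with hc0 | hsg
        · exact absurd hc0 hc.ne'
        · exact hsg
    · rintro ⟨hhalf, hsg⟩
      have hχs : χ s = 1 := (hχ1 s).2 hhalf
      rw [hχs, hχ'0 s hχs, mul_zero, mul_one]
      have : c * (s * g s ^ 2) = 0 := by rw [hsg, mul_zero]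
      linear_combination -this
end
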